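/- (2D iterated commutator recursion) Let A, B be symmetric real 2×2 matrices and set γ(C) = (C₁₁ - C₂₂)/2. Then for all n ≥ 1, {A,B}_{2n} = 2^{2n} · M(A) · [γ(A)B₁₂ - A₁₂γ(B)] · (γ(A)² + A₁₂²)^{n-1}, where M(A) is the matrix with rows (-A₁₂, γ(A)) and (γ(A), A₁₂). -/
import Mathlib


open Matrix

/-- The iterated commutator `{A,B}ₙ`. -/
def itComm (A : Matrix (Fin 2) (Fin 2) ℝ) : Matrix (Fin 2) (Fin 2) ℝ → ℕ →
    Matrix (Fin 2) (Fin 2) ℝ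
  | B, 0 => B
  | B, n + 1 => A * itComm A B n - itComm A B n * A

/-- `γ(C) = (C₁₁ - C₂₂)/2`. -/
noncomputable def gam (C : Matrix (Fin 2) (Fin 2) ℝ) : ℝ := (C 0 0 - C 1 1) / 2

lemma itComm_add (A B : Matrix (Fin 2) (Fin 2) ℝ) (m k : ℕ) :
    itComm A B (m + k) = itComm A (itComm A B k) m := by
  induction m with
  | zero => simp [itComm]
  | succ m ih => rw [Nat.succ_add]; simp [itComm, ih]

lemma itComm_smul (A C : Matrix (Fin 2) (Fin 2) ℝ) (c : ℝ) (m : ℕ) :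
    itComm A (c • C) m = c • itComm A C m := by
  induction m with
  | zero => simp [itComm]
  | succ m ih => simp [itComm, ih, mul_smul_comm, smul_mul_assoc, smul_sub]

lemma itComm_two (A B : Matrix (Fin 2) (Fin 2) ℝ)
    (hA : Aᵀ = A) (hB : Bᵀ = B) :
    itComm A B 2 =
      (4 * (gam A * B 0 1 - A 0 1 * gam B)) • !![-(A 0 1), gam A; gam A, A 0 1] := by
  have hA10 : A 1 0 = A 0 1 := congrFun (congrFun hA 0) 1
  have hB10 : B 1 0 = B 0 1 := congrFun (congrFun hB 0) 1
  ext i j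
  fin_cases i <;> fin_cases j <;>
    simp [itComm, gam, Matrix.mul_apply, Fin.sum_univ_two, hA10, hB10] <;> ring

theorem iterated_commutator_2D (A B : Matrix (Fin 2) (Fin 2) ℝ)
    (hA : Aᵀ = A) (hB : Bᵀ = B) (n : ℕ) (hn : 1 ≤ n) :
    itComm A B (2 * n) =
      ((2 : ℝ) ^ (2 * n) * (gam A * B 0 1 - A 0 1 * gam B) *
          (gam A ^ 2 + A 0 1 ^ 2) ^ (n - 1)) •
        !![-(A 0 1), gam A; gam A, A 0 1] := by
  obtain ⟨m, rfl⟩ := Nat.exists_eq_add_of_le hn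
  clear hn
  induction m with
  | zero =>
    rw [show 2*1 = 2 from rfl, itComm_two A B hA hB]
    norm_num
  | succ m ih =>
    have hM : (!![-(A 0 1), gam A; gam A, A 0 1])ᵀ = !![-(A 0 1), gam A; gam A, A 0 1] := by
      ext i j; fin_cases i <;> fin_cases j <;> simp
    have h1 : 2 * (1 + (m + 1)) = 2 + 2 * (1 + m) := by ring
    rw [h1, itComm_add, ih, itComm_smul, itComm_two A _ hA hM]
    rw [smul_smul]
    congr 1
    simp only [gam, Nat.add_sub_cancel_left]
    norm_num
    ring
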